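/- Let T be a tree with diameter at least 3 such that γ_{t,coi}(T) = |V(T)| - β(T), and suppose some support vertex v of T is adjacent to at least two leaves. Let h be a leaf adjacent to v and T' = T - h. Then γ_{t,coi}(T') = |V(T')| - β(T') and β(T') = β(T) - 1. -/

import Mathlib

open scoped Classical

/-- A set `D` is a total co-independent dominating set of `G`:
it is a total dominating set and its complement is a nonempty independent set. -/
def TotalCoIndep {V : Type*} [Fintype V] (G : SimpleGraph V) (D : Finset V) : Prop :=
  (∀ v : V, ∃ u ∈ D, G.Adj v u) ∧
  (Dᶜ : Finset V).Nonempty ∧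
  ∀ u ∈ (Dᶜ : Finset V), ∀ w ∈ (Dᶜ : Finset V), ¬ G.Adj u w

/-- The total co-independent domination number. -/
noncomputable def gammaTcoi {V : Type*} [Fintype V] (G : SimpleGraph V) : ℕ :=
  sInf {k | ∃ D : Finset V, TotalCoIndep G D ∧ D.card = k}

/-- A finite set of vertices is independent. -/
def IsIndepF {V : Type*} (G : SimpleGraph V) (B : Finset V) : Prop :=
  ∀ u ∈ B, ∀ w ∈ B, ¬ G.Adj u w

/-- The independence number. -/
noncomputable def indepNum {V : Type*} [Fintype V] (G : SimpleGraph V) : ℕ :=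
  sSup {k | ∃ B : Finset V, IsIndepF G B ∧ B.card = k}

/-- A leaf: a vertex with exactly one neighbor (degree one). -/
def IsLeaf {V : Type*} (G : SimpleGraph V) (v : V) : Prop :=
  ∃! u, G.Adj v u

/-- The set of leaves. -/
noncomputable def leaves {V : Type*} [Fintype V] (G : SimpleGraph V) : Finset V :=
  Finset.univ.filter (fun v => IsLeaf G v)

/-- A support vertex: a non-leaf adjacent to a leaf. -/
def IsSupport {V : Type*} (G : SimpleGraph V) (v : V) : Prop :=
  ¬ IsLeaf G v ∧ ∃ u, G.Adj v u ∧ IsLeaf G u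

/-- A semi-support vertex: a non-leaf, non-support vertex adjacent to a support vertex. -/
def IsSemiSupport {V : Type*} (G : SimpleGraph V) (v : V) : Prop :=
  ¬ IsLeaf G v ∧ ¬ IsSupport G v ∧ ∃ u, G.Adj v u ∧ IsSupport G u

/-- An isolated support vertex: a support vertex with no support vertex as neighbor. -/
def IsIsolatedSupport {V : Type*} (G : SimpleGraph V) (v : V) : Prop :=
  IsSupport G v ∧ ∀ u, G.Adj v u → ¬ IsSupport G u

/-!
Every total co-independent dominating set `D` has an independent complement, so
`|D| ≥ n - β`; hence `γ_{t,coi} = n - β` as soon as some such set has at most `n - β`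
vertices. Let `h, h'` be two leaves at `v`. A minimum such set of `T` may be taken to avoid
`h` (trade `h` for `h'`), and then it is a total co-independent dominating set of `T - h`
with `n - β = |V(T - h)| - (β - 1)` vertices. Finally `β(T - h) = β - 1`: a maximum
independent set of `T - h` can be made to avoid `v` (trade `v` for `h'`), after which `h`
can be added.
-/

open Finset

section

variable {V : Type*} {G : SimpleGraph V}

section Independent

lemma IsIndepF.mono {B C : Finset V} (hC : IsIndepF G C) (hBC : B ⊆ C) : IsIndepF G B :=
  fun u hu w hw => hC u (hBC hu) w (hBC hw)

lemma isIndepF_singleton (a : V) : IsIndepF G {a} := by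
  intro u hu w hw
  rw [mem_singleton] at hu hw
  subst hu hw
  exact G.irrefl

lemma isIndepF_insert {a : V} {B : Finset V} :
    IsIndepF G (insert a B) ↔ IsIndepF G B ∧ ∀ b ∈ B, ¬ G.Adj a b := by
  refine ⟨fun h => ⟨IsIndepF.mono h (subset_insert a B), fun b hb => h a (mem_insert_self a B) b
    (mem_insert_of_mem hb)⟩, fun ⟨hB, ha⟩ u hu w hw => ?_⟩
  rcases mem_insert.1 hu with rfl | hu' <;> rcases mem_insert.1 hw with rfl | hw'
  · exact G.irrefl
  · exact ha w hw'
  · exact fun hadj => ha u hu' hadj.symm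
  · exact hB u hu' w hw'

lemma IsIndepF.finset_subtype {B : Finset V} (hB : IsIndepF G B) (s : Set V)
    [DecidablePred (· ∈ s)] :
    IsIndepF (G.induce s) (B.subtype (· ∈ s)) := by
  intro u hu w hw hadj
  rw [mem_subtype] at hu hw
  exact hB u hu w hw (by simpa using hadj)

lemma IsIndepF.map_subtype {s : Set V} {B : Finset s} (hB : IsIndepF (G.induce s) B) :
    IsIndepF G (B.map (Function.Embedding.subtype _)) := by
  simp only [IsIndepF, mem_map, Function.Embedding.coe_subtype]
  rintro _ ⟨u, hu, rfl⟩ _ ⟨w, hw, rfl⟩ hadj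
  exact hB u hu w hw (by simpa using hadj)

variable [Fintype V]

lemma bddAbove_indepCards : BddAbove {k | ∃ B : Finset V, IsIndepF G B ∧ B.card = k} :=
  ⟨Fintype.card V, by rintro k ⟨B, -, rfl⟩; exact B.card_le_univ⟩

lemma IsIndepF.card_le_indepNum {B : Finset V} (hB : IsIndepF G B) : B.card ≤ indepNum G :=
  le_csSup bddAbove_indepCards ⟨B, hB, rfl⟩

lemma exists_isIndepF_card_eq_indepNum (G : SimpleGraph V) :
    ∃ B : Finset V, IsIndepF G B ∧ B.card = indepNum G :=
  Nat.sSup_mem (s := {k | ∃ B : Finset V, IsIndepF G B ∧ B.card = k})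
    ⟨0, ∅, fun _ hu => absurd hu (notMem_empty _), card_empty⟩ bddAbove_indepCards

lemma indepNum_lt_card_of_adj {u w : V} (huw : G.Adj u w) : indepNum G < Fintype.card V := by
  obtain ⟨B, hB, hcard⟩ := exists_isIndepF_card_eq_indepNum G
  rw [← hcard, card_lt_iff_ne_univ]
  rintro rfl
  exact hB u (mem_univ u) w (mem_univ w) huw

end Independent

section TotalCoIndep

variable [Fintype V]

lemma TotalCoIndep.card_sub_indepNum_le {D : Finset V} (hD : TotalCoIndep G D) :
    Fintype.card V - indepNum G ≤ D.card := by
  have hcompl : Dᶜ.card ≤ indepNum G := IsIndepF.card_le_indepNum hD.2.2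
  rw [card_compl] at hcompl
  omega

lemma TotalCoIndep.gammaTcoi_le {D : Finset V} (hD : TotalCoIndep G D) : gammaTcoi G ≤ D.card :=
  Nat.sInf_le ⟨D, hD, rfl⟩

lemma exists_totalCoIndep_card_eq_gammaTcoi (hpos : 0 < gammaTcoi G) :
    ∃ D : Finset V, TotalCoIndep G D ∧ D.card = gammaTcoi G := by
  refine Nat.sInf_mem (s := {k | ∃ D : Finset V, TotalCoIndep G D ∧ D.card = k})
    (Set.nonempty_iff_ne_empty.2 fun hempty => ?_)
  rw [gammaTcoi, hempty, Nat.sInf_empty] at hpos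
  exact hpos.false

lemma gammaTcoi_eq_of_card_le {D : Finset V} (hD : TotalCoIndep G D)
    (hcard : D.card ≤ Fintype.card V - indepNum G) :
    gammaTcoi G = Fintype.card V - indepNum G :=
  le_antisymm (hD.gammaTcoi_le.trans hcard) <|
    le_csInf ⟨_, D, hD, rfl⟩ fun _ ⟨_, hD', hk⟩ => hk ▸ hD'.card_sub_indepNum_le

lemma TotalCoIndep.finset_subtype {D : Finset V} (hD : TotalCoIndep G D) {s : Set V} [Fintype s]
    [DecidablePred (· ∈ s)] (hDs : ∀ x ∈ D, x ∈ s) (hout : ∃ x ∈ s, x ∉ D) :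
    TotalCoIndep (G.induce s) (D.subtype (· ∈ s)) := by
  obtain ⟨x, hxs, hxD⟩ := hout
  refine ⟨fun x => ?_, ⟨⟨x, hxs⟩, by simpa using hxD⟩, fun u hu w hw hadj => ?_⟩
  · obtain ⟨u, huD, hxu⟩ := hD.1 x
    exact ⟨⟨u, hDs u huD⟩, by simpa using huD, by simpa using hxu⟩
  · simp only [mem_compl, mem_subtype] at hu hw
    exact hD.2.2 u (mem_compl.2 hu) w (mem_compl.2 hw) (by simpa using hadj)

end TotalCoIndep

section Leaves

variable {v h h' : V}

lemma IsLeaf.eq_of_adj (hleaf : IsLeaf G h) (hadj : G.Adj v h) {u : V} (hu : G.Adj h u) :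
    u = v := by
  obtain ⟨w, -, huniq⟩ := hleaf
  exact (huniq u hu).trans (huniq v hadj.symm).symm

lemma IsIndepF.insert_leaf {C : Finset V} (hC : IsIndepF G C) (hleaf : IsLeaf G h)
    (hadj : G.Adj v h) (hv : v ∉ C) : IsIndepF G (insert h C) :=
  isIndepF_insert.2 ⟨hC, fun _ hb hhb => hv (hleaf.eq_of_adj hadj hhb ▸ hb)⟩

lemma IsIndepF.exists_not_mem {B : Finset V} (hB : IsIndepF G B) (hleaf' : IsLeaf G h')
    (hadj' : G.Adj v h') :
    ∃ C : Finset V, IsIndepF G C ∧ v ∉ C ∧ C.card = B.card ∧ C ⊆ insert h' B := by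
  by_cases hvB : v ∈ B
  · have hh'B : h' ∉ B := fun hh' => hB v hvB h' hh' hadj'
    refine ⟨insert h' (B.erase v), ?_, ?_, ?_, insert_subset_insert _ (erase_subset v B)⟩
    · exact (hB.mono (erase_subset v B)).insert_leaf hleaf' hadj' (notMem_erase v B)
    · simp [hadj'.ne]
    · rw [card_insert_of_notMem fun hh' => hh'B (mem_of_mem_erase hh'), card_erase_of_mem hvB,
        Nat.sub_add_cancel (card_pos.2 ⟨v, hvB⟩)]
  · exact ⟨B, hB, hvB, rfl, subset_insert h' B⟩

variable [Fintype V]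

lemma indepNum_le_indepNum_induce_ne_add_one (a : V) :
    indepNum G ≤ indepNum (G.induce {x | x ≠ a}) + 1 := by
  obtain ⟨B, hB, hcard⟩ := exists_isIndepF_card_eq_indepNum G
  have hsub := IsIndepF.card_le_indepNum
    ((hB.mono (erase_subset a B)).finset_subtype {x | x ≠ a})
  rw [card_subtype, filter_true_of_mem] at hsub
  · have := pred_card_le_card_erase (a := a) (s := B)
    omega
  · exact fun x hx => ne_of_mem_erase hx

lemma indepNum_induce_ne_add_one (hleaf : IsLeaf G h) (hadj : G.Adj v h)
    (hleaf' : IsLeaf G h') (hadj' : G.Adj v h') (hne : h' ≠ h) :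
    indepNum (G.induce {x | x ≠ h}) + 1 = indepNum G := by
  refine le_antisymm ?_ (indepNum_le_indepNum_induce_ne_add_one h)
  obtain ⟨B', hB', hcard⟩ := exists_isIndepF_card_eq_indepNum (G.induce {x | x ≠ h})
  obtain ⟨C, hC, hvC, hCcard, hCsub⟩ := hB'.map_subtype.exists_not_mem hleaf' hadj'
  have hhC : h ∉ C := fun hhC => by
    rcases mem_insert.1 (hCsub hhC) with hh | hh
    · exact hne hh.symm
    · simp at hh
  have hins := (hC.insert_leaf hleaf hadj hvC).card_le_indepNum
  rw [card_insert_of_notMem hhC, hCcard, card_map, hcard] at hins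
  exact hins

lemma TotalCoIndep.exists_not_mem {D : Finset V} (hD : TotalCoIndep G D) (hleaf : IsLeaf G h)
    (hadj : G.Adj v h) (hadj' : G.Adj v h') (hne : h' ≠ h) :
    ∃ D' : Finset V, TotalCoIndep G D' ∧ h ∉ D' ∧ D'.card ≤ D.card := by
  by_cases hhD : h ∈ D
  · have hvD : v ∈ D := by
      obtain ⟨u, huD, hhu⟩ := hD.1 h
      rwa [hleaf.eq_of_adj hadj hhu] at huD
    have hvD' : v ∈ insert h' (D.erase h) := mem_insert_of_mem (mem_erase.2 ⟨hadj.ne, hvD⟩)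
    refine ⟨insert h' (D.erase h), ⟨fun x => ?_, ⟨h, ?_⟩, fun a ha b hb hab => ?_⟩, ?_, ?_⟩
    · obtain ⟨u, huD, hxu⟩ := hD.1 x
      by_cases hu : u = h
      · subst hu
        exact ⟨h', mem_insert_self _ _, hleaf.eq_of_adj hadj hxu.symm ▸ hadj'⟩
      · exact ⟨u, mem_insert_of_mem (mem_erase.2 ⟨hu, huD⟩), hxu⟩
    · simp [hne.symm]
    -- the complement gained only `h`, whose one neighbour `v` stays in the set
    · have hcompl : ∀ x ∈ (insert h' (D.erase h))ᶜ, x = h ∨ x ∈ Dᶜ := by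
        intro x hx
        by_cases hxh : x = h
        · exact Or.inl hxh
        · exact Or.inr (mem_compl.2 fun hxD => mem_compl.1 hx
            (mem_insert_of_mem (mem_erase.2 ⟨hxh, hxD⟩)))
      rcases hcompl a ha with rfl | haD
      · exact mem_compl.1 hb (hleaf.eq_of_adj hadj hab ▸ hvD')
      rcases hcompl b hb with rfl | hbD
      · exact mem_compl.1 ha (hleaf.eq_of_adj hadj hab.symm ▸ hvD')
      exact hD.2.2 a haD b hbD hab
    · simp [hne.symm]
    · calc (insert h' (D.erase h)).card ≤ (D.erase h).card + 1 := card_insert_le _ _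
        _ = D.card := card_erase_add_one hhD
  · exact ⟨D, hD, hhD, le_rfl⟩

end Leaves

end

theorem stmt15_general {V : Type*} [Fintype V] (T : SimpleGraph V)
    (hval : gammaTcoi T = Fintype.card V - indepNum T)
    (v h : V) (hleaf : IsLeaf T h) (hadj : T.Adj v h)
    (hother : ∃ h' : V, h' ≠ h ∧ T.Adj v h' ∧ IsLeaf T h') :
    gammaTcoi (T.induce {x : V | x ≠ h}) =
        Fintype.card {x : V | x ≠ h} - indepNum (T.induce {x : V | x ≠ h}) ∧
      indepNum (T.induce {x : V | x ≠ h}) = indepNum T - 1 := by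
  obtain ⟨h', hne, hadj', hleaf'⟩ := hother
  have hβ := indepNum_induce_ne_add_one hleaf hadj hleaf' hadj' hne
  have hβpos : 1 ≤ indepNum (T.induce {x | x ≠ h}) :=
    (isIndepF_singleton ⟨h', hne⟩).card_le_indepNum
  have hlt := indepNum_lt_card_of_adj hadj
  obtain ⟨D, hD, hDcard⟩ := exists_totalCoIndep_card_eq_gammaTcoi (G := T) (by omega)
  obtain ⟨D', hD', hhD', hD'card⟩ := hD.exists_not_mem hleaf hadj hadj' hne
  obtain ⟨x, hx, hxh⟩ := exists_mem_ne (s := D'ᶜ) (by rw [card_compl]; omega) h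
  have hD'induce := hD'.finset_subtype (s := {x | x ≠ h}) (fun y hy => ne_of_mem_of_not_mem hy hhD')
    ⟨x, hxh, mem_compl.1 hx⟩
  refine ⟨gammaTcoi_eq_of_card_le hD'induce ?_, by omega⟩
  rw [card_subtype, Set.card_ne_eq]
  refine (card_filter_le _ _).trans ?_
  omega

/-- Removing one of at least two leaves of a support vertex from a tree attaining
`γ_{t,coi} = n - β` yields a tree attaining the same equality, with independence number
dropping by exactly one. -/
theorem stmt15 {V : Type*} [Fintype V] (T : SimpleGraph V) (hT : T.IsTree)
    (hdiam : ∃ x y : V, 3 ≤ T.dist x y)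
    (hval : gammaTcoi T = Fintype.card V - indepNum T)
    (v h : V) (hsupp : IsSupport T v) (hleaf : IsLeaf T h) (hadj : T.Adj v h)
    (hother : ∃ h' : V, h' ≠ h ∧ T.Adj v h' ∧ IsLeaf T h') :
    gammaTcoi (T.induce {x : V | x ≠ h}) =
        Fintype.card {x : V | x ≠ h} - indepNum (T.induce {x : V | x ≠ h}) ∧
      indepNum (T.induce {x : V | x ≠ h}) = indepNum T - 1 :=
  stmt15_general T hval v h hleaf hadj hother
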